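/- arXiv:2503.02946 — 9 statements merged into one kernel-verified Lean document; each statement's English description precedes it below -/
import Mathlib

section
/- Existence of equilibrium prices (Proposition 3.1, existence part): Let ι be a nonempty finite type and U : Finset ι → ℝ a monotone set function (S ⊆ T implies U(S) ≤ U(T)). Then there exists a price vector p : ι → ℝ that solves the price system for U, i.e., for every i ∈ ι, p i = min over all finsets S ⊆ univ \ {i} of (U(univ) − U(S) − Σ_{j ∈ univ \ S, j ≠ i} p j). -/
open Finset

/-- A price vector `p` solves the price system for the set function `U` if for every
firm `i`, `p i` equals the minimum over all finsets `S ⊆ univ \ {i}` of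
`U univ − U S − Σ_{j ∈ univ \ S, j ≠ i} p j`. -/
def SolvesPriceSystem {ι : Type*} [Fintype ι] [DecidableEq ι]
    (U : Finset ι → ℝ) (p : ι → ℝ) : Prop :=
  ∀ i : ι,
    IsLeast
      ((fun S : Finset ι => U univ - U S - ∑ j ∈ (univ \ S).erase i, p j) ''
        {S : Finset ι | S ⊆ univ \ {i}})
      (p i)

/-- **Existence of equilibrium prices** (Proposition 3.1, existence part):
for any monotone set function `U` on a nonempty finite type, there exists a price
vector solving the price system for `U`. -/
theorem exists_price_system_solution
    {ι : Type*} [Fintype ι] [DecidableEq ι] [Nonempty ι]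
    (U : Finset ι → ℝ) (hU : ∀ S T : Finset ι, S ⊆ T → U S ≤ U T) :
    ∃ p : ι → ℝ, SolvesPriceSystem U p := by
  classical
  -- `f T` is the constraint bound for the set `T` (the complement of the purchase set).
  set f : Finset ι → ℝ := fun T => U univ - U (univ \ T) with hfdef
  have hf0 : ∀ T, 0 ≤ f T := fun T => sub_nonneg.2 (hU _ _ (sdiff_subset))
  -- the feasible region
  set K : Set (ι → ℝ) :=
    {p | (∀ T : Finset ι, ∑ j ∈ T, p j ≤ f T) ∧ 0 ≤ ∑ j, p j} with hKdef
  have h0K : (0 : ι → ℝ) ∈ K := by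
    refine ⟨fun T => ?_, by simp⟩
    simpa using hf0 T
  -- `K` is contained in a box
  set B : ℝ := ∑ k : ι, |f {k}| with hBdef
  have habsB : ∀ s : Finset ι, ∑ k ∈ s, |f {k}| ≤ B := by
    intro s
    exact Finset.sum_le_sum_of_subset_of_nonneg (subset_univ s)
      (fun k _ _ => abs_nonneg _)
  have hsingle : ∀ p ∈ K, ∀ j : ι, p j ≤ |f {j}| := by
    intro p hp j
    have := hp.1 {j}
    simpa using this.trans (le_abs_self _)
  have hsub : K ⊆ Set.Icc (fun _ => -B) (fun _ => B) := by
    rintro p ⟨h1, h2⟩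
    constructor
    · intro j
      have hsumerase : ∑ k ∈ univ.erase j, p k ≤ B := by
        calc ∑ k ∈ univ.erase j, p k ≤ ∑ k ∈ univ.erase j, |f {k}| :=
              Finset.sum_le_sum (fun k _ => hsingle p ⟨h1, h2⟩ k)
          _ ≤ B := habsB _
      have hpj : p j = ∑ k : ι, p k - ∑ k ∈ univ.erase j, p k := by
        rw [Finset.sum_erase_eq_sub (mem_univ j)]; ring
      have : -B ≤ p j := by
        rw [hpj]
        have := sub_le_sub h2 (le_refl (∑ k ∈ univ.erase j, p k))
        linarith
      simpa using this
    · intro j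
      have h3 : p j ≤ |f {j}| := hsingle p ⟨h1, h2⟩ j
      have h4 : |f {j}| ≤ B := by simpa using habsB {j}
      simpa using h3.trans h4
  have hKclosed : IsClosed K := by
    have h1 : IsClosed (⋂ T : Finset ι, {p : ι → ℝ | ∑ j ∈ T, p j ≤ f T}) :=
      isClosed_iInter fun T =>
        isClosed_le (continuous_finset_sum T fun j _ => continuous_apply j) continuous_const
    have h2 : IsClosed {p : ι → ℝ | 0 ≤ ∑ j, p j} :=
      isClosed_le continuous_const (continuous_finset_sum univ fun j _ => continuous_apply j)
    have hK : K = (⋂ T : Finset ι, {p : ι → ℝ | ∑ j ∈ T, p j ≤ f T}) ∩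
        {p : ι → ℝ | 0 ≤ ∑ j, p j} := by
      ext p; simp [hKdef, Set.mem_iInter]
    rw [hK]; exact h1.inter h2
  have hKcompact : IsCompact K :=
    (isCompact_Icc (a := fun _ : ι => -B) (b := fun _ : ι => B)).of_isClosed_subset
      hKclosed hsub
  -- maximize the total sum over K
  obtain ⟨p, hpK, hmax⟩ := hKcompact.exists_isMaxOn ⟨0, h0K⟩
    ((continuous_finset_sum univ fun j _ => continuous_apply j).continuousOn)
  have hmax' : ∀ q ∈ K, ∑ j, q j ≤ ∑ j, p j := fun q hq => hmax hq
  -- at the maximizer, each coordinate lies in a tight constraint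
  have tight : ∀ i : ι, ∃ T : Finset ι, i ∈ T ∧ ∑ j ∈ T, p j = f T := by
    intro i
    by_contra hcon
    push_neg at hcon
    have hstrict : ∀ T : Finset ι, i ∈ T → ∑ j ∈ T, p j < f T := fun T hT =>
      lt_of_le_of_ne (hpK.1 T) (hcon T hT)
    set s : Finset (Finset ι) := univ.filter (fun T : Finset ι => i ∈ T) with hsdef
    have hs : s.Nonempty := ⟨{i}, by simp [hsdef]⟩
    set ε : ℝ := s.inf' hs (fun T => f T - ∑ j ∈ T, p j) with hεdef
    have hεpos : 0 < ε := by
      rw [hεdef]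
      rw [Finset.lt_inf'_iff]
      intro T hT
      have hiT : i ∈ T := by simpa [hsdef] using hT
      linarith [hstrict T hiT]
    set q : ι → ℝ := p + Pi.single i ε with hqdef
    have hsumq : ∀ T : Finset ι, ∑ j ∈ T, q j =
        ∑ j ∈ T, p j + (if i ∈ T then ε else 0) := by
      intro T
      simp only [hqdef, Pi.add_apply, Finset.sum_add_distrib, Finset.sum_pi_single' i ε T]
    have hqK : q ∈ K := by
      constructor
      · intro T
        rw [hsumq T]
        by_cases hiT : i ∈ T
        · have hεle : ε ≤ f T - ∑ j ∈ T, p j := by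
            rw [hεdef]
            exact Finset.inf'_le _ (by simp [hsdef, hiT])
          simp only [hiT, if_true]
          linarith
        · simp only [hiT, if_false]
          simpa using hpK.1 T
      · have := hsumq univ
        rw [this]
        simp only [mem_univ, if_true]
        linarith [hpK.2, hεpos.le]
    have h1 : ∑ j, q j ≤ ∑ j, p j := hmax' q hqK
    have h2 : ∑ j, q j = ∑ j, p j + ε := by
      rw [hsumq univ]; simp
    linarith
  -- assemble the solution
  refine ⟨p, fun i => ?_⟩
  obtain ⟨T, hiT, hTtight⟩ := tight i
  constructor
  · -- p i is attained
    refine ⟨univ \ T, ?_, ?_⟩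
    · intro j hj
      simp only [mem_sdiff, mem_univ, true_and, mem_singleton] at hj ⊢
      rintro rfl; exact hj hiT
    · have hTT : univ \ (univ \ T) = T := Finset.sdiff_sdiff_eq_self (subset_univ T)
      simp only [hTT]
      rw [Finset.sum_erase_eq_sub hiT, hTtight]
      simp only [hfdef]
      ring
  · -- p i is a lower bound
    rintro x ⟨S, hS, rfl⟩
    simp only [Set.mem_setOf_eq] at hS
    have hiS : i ∉ S := fun h => by simpa using (hS h)
    have hiT' : i ∈ univ \ S := by simp [hiS]
    have hSS : univ \ (univ \ S) = S := Finset.sdiff_sdiff_eq_self (subset_univ S)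
    have hcons : ∑ j ∈ univ \ S, p j ≤ U univ - U S := by
      have := hpK.1 (univ \ S)
      simpa [hfdef, hSS] using this
    simp only []
    rw [Finset.sum_erase_eq_sub hiT']
    linarith
end

section
/- Nonnegativity of equilibrium prices (Proposition 3.1, nonnegativity part): Let ι be a nonempty finite type and U : Finset ι → ℝ a monotone set function (S ⊆ T implies U(S) ≤ U(T)). Then every price vector p : ι → ℝ that solves the price system for U satisfies p i ≥ 0 for all i ∈ ι. -/
open Finset

/-- **Nonnegativity of equilibrium prices** (Proposition 3.1, nonnegativity part):
for any monotone set function `U` on a nonempty finite type, every price vector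
solving the price system for `U` is nonnegative. -/
theorem price_system_solution_nonneg
    {ι : Type*} [Fintype ι] [DecidableEq ι] [Nonempty ι]
    (U : Finset ι → ℝ) (hU : ∀ S T : Finset ι, S ⊆ T → U S ≤ U T)
    (p : ι → ℝ) (hp : SolvesPriceSystem U p) :
    ∀ i : ι, 0 ≤ p i := by
  -- Key lemma: for every `T`, `U T + ∑_{j ∈ univ \ T} p j ≤ U univ`.
  have key : ∀ T : Finset ι, U T + ∑ j ∈ univ \ T, p j ≤ U univ := by
    intro T
    by_cases hT : T = univ
    · subst hT; simp
    · obtain ⟨k, hk⟩ : ∃ k, k ∈ univ \ T := by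
        have : (univ \ T).Nonempty := by
          rw [Finset.sdiff_nonempty]
          intro h
          exact hT (Finset.eq_univ_of_forall fun x => h (Finset.mem_univ x))
        exact this
      have hkT : k ∉ T := (Finset.mem_sdiff.mp hk).2
      have hmem : T ∈ {S : Finset ι | S ⊆ univ \ {k}} := by
        intro x hx
        simp only [Finset.mem_sdiff, Finset.mem_univ, Finset.mem_singleton, true_and]
        rintro rfl; exact hkT hx
      have hlb := (hp k).2 ⟨T, hmem, rfl⟩
      simp only at hlb
      have hsum : ∑ j ∈ (univ \ T).erase k, p j + p k = ∑ j ∈ univ \ T, p j :=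
        Finset.sum_erase_add _ _ hk
      linarith
  intro i
  obtain ⟨S, hS, hSeq⟩ := (hp i).1
  simp only at hSeq
  have hiS : i ∉ S := by
    intro h
    have := hS h
    simp at this
  have hiU : i ∈ univ \ S := Finset.mem_sdiff.mpr ⟨Finset.mem_univ i, hiS⟩
  have hsum : ∑ j ∈ (univ \ S).erase i, p j + p i = ∑ j ∈ univ \ S, p j :=
    Finset.sum_erase_add _ _ hiU
  have hEq : U univ = U S + ∑ j ∈ univ \ S, p j := by
    linarith
  have hins := key (insert i S)
  have hsd : univ \ insert i S = (univ \ S).erase i := by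
    ext x
    simp [Finset.mem_erase, Finset.mem_sdiff, and_comm, not_or]
  rw [hsd] at hins
  have hmono := hU S (insert i S) (Finset.subset_insert i S)
  linarith
end

section
/- Marginal-contribution prices under decreasing marginal returns (Corollary 3.2): Let ι be a nonempty finite type and U : Finset ι → ℝ a set function satisfying decreasing marginal returns. Define p : ι → ℝ by p i = U(univ) − U(univ \ {i}). Then for every i ∈ ι and every finset S ⊆ univ \ {i}, U(univ \ {i}) ≥ U(S) + Σ_{j ∈ univ \ S, j ≠ i} p j; consequently p solves the price system for U, i.e., for every i, p i = min over all finsets S ⊆ univ \ {i} of (U(univ) − U(S) − Σ_{j ∈ univ \ S, j ≠ i} p j). -/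
/-! Under decreasing marginal returns, adding `j` to any set raises `U` by at least
`p j = U univ - U (univ \ {j})`, its marginal value at `univ`. Adding the elements outside
`S ∪ {i}` one at a time therefore gives `U S + ∑ p j ≤ U (univ \ {i})`: every candidate in the
minimum defining the price of `i` is at least `p i`, and `S = univ \ {i}` attains it. -/

open Finset

/-- A set function `U` satisfies decreasing marginal returns if for all finsets
`S ⊆ T` and every `j ∈ S`, `U S − U (S \ {j}) ≥ U T − U (T \ {j})`. -/
def DecreasingMarginalReturns {ι : Type*} [DecidableEq ι] (U : Finset ι → ℝ) : Prop :=
  ∀ S T : Finset ι, S ⊆ T → ∀ j ∈ S, U T - U (T.erase j) ≤ U S - U (S.erase j)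

namespace DecreasingMarginalReturns

variable {ι : Type*} [DecidableEq ι] {U : Finset ι → ℝ}

theorem marginal_le_marginal_insert (hU : DecreasingMarginalReturns U) {S T : Finset ι}
    {j : ι} (hST : insert j S ⊆ T) (hj : j ∉ S) :
    U T - U (T.erase j) ≤ U (insert j S) - U S := by
  simpa only [erase_insert hj] using hU (insert j S) T hST j (mem_insert_self j S)

theorem add_sum_marginal_le (hU : DecreasingMarginalReturns U) {S T D : Finset ι}
    (hSD : Disjoint S D) (hT : S ∪ D ⊆ T) :
    U S + ∑ j ∈ D, (U T - U (T.erase j)) ≤ U (S ∪ D) := by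
  induction D using Finset.induction_on generalizing S with
  | empty => simp
  | insert a D haD ih =>
    have haS : a ∉ S := fun h => disjoint_left.mp hSD h (mem_insert_self a D)
    have hunion : S ∪ insert a D = insert a S ∪ D := by
      rw [union_insert, insert_union]
    rw [hunion] at hT ⊢
    have hstep := hU.marginal_le_marginal_insert (subset_union_left.trans hT) haS
    have hrest := ih (disjoint_insert_left.mpr ⟨haD, hSD.mono_right (subset_insert a D)⟩) hT
    rw [sum_insert haD]
    linarith

end DecreasingMarginalReturns

theorem solvesPriceSystem_of_forall_le {ι : Type*} [Fintype ι] [DecidableEq ι]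
    {U : Finset ι → ℝ} {p : ι → ℝ} (hp : ∀ i : ι, p i = U univ - U (univ \ {i}))
    (hle : ∀ i : ι, ∀ S : Finset ι, S ⊆ univ \ {i} →
      U S + ∑ j ∈ (univ \ S).erase i, p j ≤ U (univ \ {i})) :
    SolvesPriceSystem U p := by
  intro i
  refine ⟨⟨univ \ {i}, Subset.refl _, ?_⟩, ?_⟩
  · have hempty : (univ \ (univ \ {i})).erase i = ∅ := by
      rw [sdiff_sdiff_right_self, inf_eq_inter, univ_inter, erase_singleton]
    simp only [hempty, sum_empty, sub_zero, hp i]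
  · rintro _ ⟨S, hS, rfl⟩
    linarith [hle i S hS, hp i]

theorem marginal_contribution_prices_general
    {ι : Type*} [Fintype ι] [DecidableEq ι]
    (U : Finset ι → ℝ) (hU : DecreasingMarginalReturns U)
    (p : ι → ℝ) (hp : ∀ i : ι, p i = U univ - U (univ \ {i})) :
    (∀ i : ι, ∀ S : Finset ι, S ⊆ univ \ {i} →
      U S + ∑ j ∈ (univ \ S).erase i, p j ≤ U (univ \ {i}))
    ∧ SolvesPriceSystem U p := by
  have hle : ∀ i : ι, ∀ S : Finset ι, S ⊆ univ \ {i} →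
      U S + ∑ j ∈ (univ \ S).erase i, p j ≤ U (univ \ {i}) := by
    intro i S hS
    rw [sdiff_singleton_eq_erase] at hS ⊢
    have hsum := hU.add_sum_marginal_le (T := univ) (D := univ.erase i \ S) disjoint_sdiff
      (subset_univ _)
    rw [union_sdiff_of_subset hS] at hsum
    simpa only [← erase_sdiff_comm, hp, sdiff_singleton_eq_erase] using hsum
  exact ⟨hle, solvesPriceSystem_of_forall_le hp hle⟩

/-- **Marginal-contribution prices under decreasing marginal returns** (Corollary 3.2):
if `U` satisfies decreasing marginal returns and `p i = U univ − U (univ \ {i})`,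
then for every `i` and every `S ⊆ univ \ {i}`,
`U (univ \ {i}) ≥ U S + Σ_{j ∈ univ \ S, j ≠ i} p j`, and consequently `p` solves the
price system for `U`. -/
theorem marginal_contribution_prices
    {ι : Type*} [Fintype ι] [DecidableEq ι] [Nonempty ι]
    (U : Finset ι → ℝ) (hU : DecreasingMarginalReturns U)
    (p : ι → ℝ) (hp : ∀ i : ι, p i = U univ - U (univ \ {i})) :
    (∀ i : ι, ∀ S : Finset ι, S ⊆ univ \ {i} →
      U S + ∑ j ∈ (univ \ S).erase i, p j ≤ U (univ \ {i}))
    ∧ SolvesPriceSystem U p :=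
  marginal_contribution_prices_general U hU p hp
end

section
/- Decreasing marginal returns in the symmetric common-model setting (Lemma A.4): Let ι be a nonempty finite type, let B, σ² ∈ ℝ, V ≥ 0, and ū ∈ ℝ with ū < −B − (3/2)·V − σ². Define U : Finset ι → ℝ by U(∅) = ū and U(S) = −B − V/|S| − σ² for every nonempty finset S. Then U satisfies decreasing marginal returns: for all finsets S ⊆ T and every j ∈ S, U(S) − U(S \ {j}) ≥ U(T) − U(T \ {j}). -/
open Finset

lemma dmr_aux (V s t : ℝ) (hV : 0 ≤ V) (hs : 2 ≤ s) (hst : s ≤ t) :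
    V / (t - 1) - V / t ≤ V / (s - 1) - V / s := by
  have hs1 : (0:ℝ) < s - 1 := by linarith
  have hs0 : (0:ℝ) < s := by linarith
  have ht1 : (0:ℝ) < t - 1 := by linarith
  have ht0 : (0:ℝ) < t := by linarith
  rw [div_sub_div _ _ ht1.ne' ht0.ne', div_sub_div _ _ hs1.ne' hs0.ne']
  have h1 : V * t - (t - 1) * V = V := by ring
  have h2 : V * s - (s - 1) * V = V := by ring
  rw [h1, h2]
  have hle : (s - 1) * s ≤ (t - 1) * t := by nlinarith
  gcongr

/-- **Decreasing marginal returns in the symmetric common-model setting** (Lemma A.4):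
if `ū < −B − (3/2)·V − σ²` with `V ≥ 0`, then the set function with `U ∅ = ū` and
`U S = −B − V/|S| − σ²` for nonempty `S` satisfies decreasing marginal returns. -/
theorem symmetric_common_model_dmr
    {ι : Type*} [Fintype ι] [DecidableEq ι] [Nonempty ι]
    (B V σ2 ubar : ℝ) (hV : 0 ≤ V)
    (hubar : ubar < -B - (3 / 2) * V - σ2)
    (U : Finset ι → ℝ)
    (hU0 : U ∅ = ubar)
    (hU : ∀ S : Finset ι, S.Nonempty → U S = -B - V / (S.card : ℝ) - σ2) :
    DecreasingMarginalReturns U := by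
  intro S T hST j hjS
  have hjT : j ∈ T := hST hjS
  have hSne : S.Nonempty := ⟨j, hjS⟩
  have hTne : T.Nonempty := ⟨j, hjT⟩
  have hs1 : 1 ≤ S.card := Finset.card_pos.mpr hSne
  have hst : S.card ≤ T.card := Finset.card_le_card hST
  have hUS := hU S hSne
  have hUT := hU T hTne
  have hcSe : (S.erase j).card = S.card - 1 := Finset.card_erase_of_mem hjS
  have hcTe : (T.erase j).card = T.card - 1 := Finset.card_erase_of_mem hjT
  by_cases hS2 : 2 ≤ S.card
  · have hT2 : 2 ≤ T.card := le_trans hS2 hst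
    have hSe : (S.erase j).Nonempty := Finset.card_pos.mp (by omega)
    have hTe : (T.erase j).Nonempty := Finset.card_pos.mp (by omega)
    have hUSe := hU _ hSe
    have hUTe := hU _ hTe
    rw [hUS, hUT, hUSe, hUTe, hcSe, hcTe]
    have hsc : ((S.card - 1 : ℕ) : ℝ) = (S.card : ℝ) - 1 := by
      rw [Nat.cast_sub (by omega)]; norm_num
    have htc : ((T.card - 1 : ℕ) : ℝ) = (T.card : ℝ) - 1 := by
      rw [Nat.cast_sub (by omega)]; norm_num
    rw [hsc, htc]
    have hs : (2:ℝ) ≤ (S.card : ℝ) := by exact_mod_cast hS2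
    have ht : (S.card : ℝ) ≤ (T.card : ℝ) := by exact_mod_cast hst
    have key := dmr_aux V (S.card : ℝ) (T.card : ℝ) hV hs ht
    linarith
  · have hS1 : S.card = 1 := by omega
    have hSe : S.erase j = ∅ := Finset.card_eq_zero.mp (by omega)
    by_cases hT1 : T.card = 1
    · have : S = T := Finset.eq_of_subset_of_card_le hST (by omega)
      subst this
      exact le_refl _
    · have hT2 : 2 ≤ T.card := by omega
      have hTe : (T.erase j).Nonempty := Finset.card_pos.mp (by omega)
      have hUTe := hU _ hTe
      rw [hUS, hUT, hUTe, hcTe, hSe, hU0, hS1]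
      have htc : ((T.card - 1 : ℕ) : ℝ) = (T.card : ℝ) - 1 := by
        rw [Nat.cast_sub (by omega)]; norm_num
      rw [htc]
      have ht : (2:ℝ) ≤ (T.card : ℝ) := by exact_mod_cast hT2
      have key := dmr_aux V 2 (T.card : ℝ) hV le_rfl ht
      norm_num at key ⊢
      linarith
end

section
/- Efficiency of equilibrium entry with a common model: Let c > 0 and V, B, σ² ∈ ℝ with V ≥ 2c. The set {j ∈ ℕ : j ≥ 1 and c·j·(j−1) ≤ V} is nonempty and finite; let N* be its maximum. Then N* ≥ 2 and for every integer n ≥ 1, −B − V/N* − σ² − N*·c ≥ −B − V/n − σ² − n·c; that is, N* minimizes the function n ↦ V/n + n·c over the positive integers. -/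
/-- **Efficiency of equilibrium entry with a common model**: for `c > 0` and `V ≥ 2c`,
the set `{j ∈ ℕ : j ≥ 1 ∧ c·j·(j−1) ≤ V}` is nonempty and finite, its maximum `N* = sSup`
satisfies `N* ≥ 2`, and `N*` maximizes `n ↦ −B − V/n − σ² − n·c` over positive integers
(equivalently, minimizes `n ↦ V/n + n·c`). -/
theorem equilibrium_entry_efficient
    (c V B σ2 : ℝ) (hc : 0 < c) (hV : 2 * c ≤ V)
    (A : Set ℕ) (hA : A = {j : ℕ | 1 ≤ j ∧ c * (j : ℝ) * ((j : ℝ) - 1) ≤ V}) :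
    A.Nonempty ∧ A.Finite ∧ 2 ≤ sSup A ∧
      ∀ n : ℕ, 1 ≤ n →
        -B - V / ((sSup A : ℕ) : ℝ) - σ2 - ((sSup A : ℕ) : ℝ) * c
          ≥ -B - V / (n : ℝ) - σ2 - (n : ℝ) * c := by
  subst hA
  have h2mem : 2 ∈ {j : ℕ | 1 ≤ j ∧ c * (j : ℝ) * ((j : ℝ) - 1) ≤ V} := by
    constructor
    · norm_num
    · push_cast; nlinarith
  have hne : Set.Nonempty {j : ℕ | 1 ≤ j ∧ c * (j : ℝ) * ((j : ℝ) - 1) ≤ V} :=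
    ⟨2, h2mem⟩
  have hsub : {j : ℕ | 1 ≤ j ∧ c * (j : ℝ) * ((j : ℝ) - 1) ≤ V} ⊆
      Set.Iic (Nat.ceil (V / c) + 1) := by
    intro j hj
    obtain ⟨hj1, hj2⟩ := hj
    have hjr : (1 : ℝ) ≤ (j : ℝ) := by exact_mod_cast hj1
    have h3 : c * ((j : ℝ) - 1) ≤ V := by nlinarith
    have h4 : (j : ℝ) - 1 ≤ V / c := by
      rw [le_div_iff₀ hc]; linarith [mul_comm c ((j:ℝ) - 1)]
    have h5 : ((j - 1 : ℕ) : ℝ) ≤ ((Nat.ceil (V / c) : ℕ) : ℝ) := by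
      have : ((j - 1 : ℕ) : ℝ) = (j : ℝ) - 1 := by
        push_cast [hj1]; ring
      rw [this]
      exact h4.trans (Nat.le_ceil _)
    have h6 : j - 1 ≤ Nat.ceil (V / c) := by exact_mod_cast h5
    simp only [Set.mem_Iic]
    omega
  have hfin : Set.Finite {j : ℕ | 1 ≤ j ∧ c * (j : ℝ) * ((j : ℝ) - 1) ≤ V} :=
    Set.Finite.subset (Set.finite_Iic _) hsub
  have hbdd : BddAbove {j : ℕ | 1 ≤ j ∧ c * (j : ℝ) * ((j : ℝ) - 1) ≤ V} :=
    hfin.bddAbove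
  set N := sSup {j : ℕ | 1 ≤ j ∧ c * (j : ℝ) * ((j : ℝ) - 1) ≤ V} with hN
  have hNmem : N ∈ {j : ℕ | 1 ≤ j ∧ c * (j : ℝ) * ((j : ℝ) - 1) ≤ V} :=
    Nat.sSup_mem hne hbdd
  have hN2 : 2 ≤ N := le_csSup hbdd h2mem
  have hNsucc : N + 1 ∉ {j : ℕ | 1 ≤ j ∧ c * (j : ℝ) * ((j : ℝ) - 1) ≤ V} := by
    intro h
    have := le_csSup hbdd h
    omega
  have hN1 : V < c * ((N : ℝ) + 1) * (N : ℝ) := by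
    by_contra h
    push_neg at h
    exact hNsucc ⟨by omega, by push_cast; nlinarith⟩
  obtain ⟨_, hNle⟩ := hNmem
  refine ⟨hne, hfin, hN2, ?_⟩
  intro n hn
  set x : ℝ := (n : ℝ)
  set y : ℝ := (N : ℝ)
  have hx : (1 : ℝ) ≤ x := by show (1:ℝ) ≤ (n:ℝ); exact_mod_cast hn
  have hy : (2 : ℝ) ≤ y := by show (2:ℝ) ≤ (N:ℝ); exact_mod_cast hN2
  have hxpos : 0 < x := by linarith
  have hypos : 0 < y := by linarith
  have key : 0 ≤ (y - x) * (V - c * x * y) := by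
    rcases le_or_gt n N with h | h
    · rcases eq_or_lt_of_le h with heq | hlt
      · have : x = y := by simp [x, y, heq]
        rw [this]; ring_nf; simp
      · have hxy : x + 1 ≤ y := by
          show (n:ℝ) + 1 ≤ (N:ℝ)
          exact_mod_cast hlt
        have : c * x * y ≤ V := by nlinarith
        nlinarith
    · have hxy : y + 1 ≤ x := by
        show (N:ℝ) + 1 ≤ (n:ℝ)
        exact_mod_cast h
      have : V ≤ c * x * y := by nlinarith
      nlinarith
  have main : V / y + y * c ≤ V / x + x * c := by
    have heq : (V / x + x * c) - (V / y + y * c) = (y - x) * (V - c * x * y) / (x * y) := by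
      field_simp
      ring
    have : 0 ≤ (V / x + x * c) - (V / y + y * c) := by
      rw [heq]
      positivity
    linarith
  simp only [ge_iff_le]
  linarith
end

section
/- Consumer surplus is maximized at V = 2c with two entrants (Proposition 3.3(ii)): Let c > 0, B, σ² ∈ ℝ, and ū < −B − 3c − σ². For V > 0 define N(V) = max{j ∈ ℕ : j ≥ 1 and c·j·(j−1) ≤ V}, and define consumer surplus CS(V) = 0 if V < 2c, and CS(V) = −B − ((2·N(V) − 1)/(N(V)·(N(V) − 1)))·V − σ² − ū if V ≥ 2c. Then N(2c) = 2 and for every V > 0, CS(V) ≤ CS(2c) = −B − 3c − σ² − ū. -/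
/-- **Consumer surplus is maximized at `V = 2c` with two entrants** (Proposition 3.3(ii)):
with entry cost `c > 0` and outside option `ū < −B − 3c − σ²`, letting
`N(V) = max {j ∈ ℕ : j ≥ 1 ∧ c·j·(j−1) ≤ V}` and consumer surplus
`CS(V) = 0` for `V < 2c` and
`CS(V) = −B − ((2N(V) − 1)/(N(V)(N(V) − 1)))·V − σ² − ū` for `V ≥ 2c`,
we have `N(2c) = 2` and `CS(V) ≤ CS(2c) = −B − 3c − σ² − ū` for all `V > 0`. -/
theorem consumer_surplus_max_at_two_entrants
    (c B σ2 ubar : ℝ) (hc : 0 < c) (hubar : ubar < -B - 3 * c - σ2)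
    (N : ℝ → ℕ)
    (hN : ∀ V : ℝ, 0 < V → N V = sSup {j : ℕ | 1 ≤ j ∧ c * (j : ℝ) * ((j : ℝ) - 1) ≤ V})
    (CS : ℝ → ℝ)
    (hCS₁ : ∀ V : ℝ, 0 < V → V < 2 * c → CS V = 0)
    (hCS₂ : ∀ V : ℝ, 2 * c ≤ V →
      CS V = -B - ((2 * (N V : ℝ) - 1) / ((N V : ℝ) * ((N V : ℝ) - 1))) * V - σ2 - ubar) :
    N (2 * c) = 2
    ∧ (∀ V : ℝ, 0 < V → CS V ≤ CS (2 * c))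
    ∧ CS (2 * c) = -B - 3 * c - σ2 - ubar := by
  -- basic structure of N
  have hbdd : ∀ V : ℝ, 0 < V → BddAbove {j : ℕ | 1 ≤ j ∧ c * (j : ℝ) * ((j : ℝ) - 1) ≤ V} := by
    intro V hV
    refine ⟨Nat.ceil (V / c) + 1, fun j hj => ?_⟩
    obtain ⟨hj1, hj2⟩ := hj
    have hjr : (1 : ℝ) ≤ (j : ℝ) := by exact_mod_cast hj1
    have h1 : c * ((j : ℝ) - 1) ≤ c * (j : ℝ) * ((j : ℝ) - 1) := by
      nlinarith [mul_nonneg hc.le (sq_nonneg ((j : ℝ) - 1))]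
    have h2 : ((j : ℝ) - 1) ≤ V / c := by
      rw [le_div_iff₀ hc]; nlinarith
    have h3 : ((j - 1 : ℕ) : ℝ) ≤ V / c := by
      rw [Nat.cast_sub hj1]; simpa using h2
    have h4 : (j - 1 : ℕ) ≤ Nat.ceil (V / c) := by
      have := h3.trans (Nat.le_ceil (V / c))
      exact_mod_cast this
    omega
  have hne : ∀ V : ℝ, 0 < V → (1 : ℕ) ∈ {j : ℕ | 1 ≤ j ∧ c * (j : ℝ) * ((j : ℝ) - 1) ≤ V} := by
    intro V hV
    refine ⟨le_refl 1, ?_⟩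
    simp
    linarith
  have hmem : ∀ V : ℝ, 0 < V → (1 ≤ N V ∧ c * (N V : ℝ) * ((N V : ℝ) - 1) ≤ V) := by
    intro V hV
    rw [hN V hV]
    exact Nat.sSup_mem ⟨1, hne V hV⟩ (hbdd V hV)
  have hle : ∀ V : ℝ, 0 < V → ∀ j : ℕ, 1 ≤ j → c * (j : ℝ) * ((j : ℝ) - 1) ≤ V → j ≤ N V := by
    intro V hV j h1 h2
    rw [hN V hV]
    exact le_csSup (hbdd V hV) ⟨h1, h2⟩
  have h2c : 0 < 2 * c := by linarith
  -- N (2c) = 2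
  have hN2 : N (2 * c) = 2 := by
    have hge : 2 ≤ N (2 * c) := by
      apply hle _ h2c 2 (by norm_num)
      norm_num
      linarith
    have hlt : N (2 * c) < 3 := by
      by_contra h
      push_neg at h
      have h3 : (3 : ℝ) ≤ (N (2 * c) : ℝ) := by exact_mod_cast h
      have := (hmem _ h2c).2
      have hx : 0 ≤ c * ((N (2*c) : ℝ) - 3) * ((N (2*c) : ℝ) + 2) := by
        apply mul_nonneg (mul_nonneg hc.le (by linarith)) (by linarith)
      nlinarith
    omega
  -- CS (2c)
  have hCS2c : CS (2 * c) = -B - 3 * c - σ2 - ubar := by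
    rw [hCS₂ _ le_rfl, hN2]
    norm_num
    ring
  refine ⟨hN2, ?_, hCS2c⟩
  intro V hV
  rcases lt_or_ge V (2 * c) with h | h
  · rw [hCS₁ V hV h, hCS2c]; linarith
  · rw [hCS₂ V h, hCS2c]
    have hVpos : 0 < V := by linarith
    have hNge : 2 ≤ N V := by
      apply hle _ hVpos 2 (by norm_num)
      push_cast
      nlinarith
    have hn : (2 : ℝ) ≤ (N V : ℝ) := by exact_mod_cast hNge
    have hcb : c * (N V : ℝ) * ((N V : ℝ) - 1) ≤ V := (hmem _ hVpos).2
    set n : ℝ := (N V : ℝ)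
    have hden : 0 < n * (n - 1) := by nlinarith
    have hkey : 3 * c ≤ ((2 * n - 1) / (n * (n - 1))) * V := by
      rw [div_mul_eq_mul_div, le_div_iff₀ hden]
      have h1 : (2 * n - 1) * (c * n * (n - 1)) ≤ (2 * n - 1) * V := by
        apply mul_le_mul_of_nonneg_left hcb
        nlinarith
      nlinarith
    linarith
end

section
/- First-order condition for a symmetric interior equilibrium (Proposition 3.5, FOC): Let t₀ ∈ ℝ and let B, V, θ : ℝ → ℝ be twice continuously differentiable on a neighborhood of t₀ with B > 0 and V > 0 on that neighborhood and θ(t₀) = 0. Define ρ(t) = √(B(t)·B(t₀))·cos(θ(t)), w(t) = (V(t₀) + B(t₀) − ρ(t)) / (V(t) + B(t) + V(t₀) + B(t₀) − 2ρ(t)), and Π(t) = (V(t₀) + B(t₀)) − (1 − w(t))²·(V(t₀) + B(t₀)) − w(t)²·(V(t) + B(t)) − 2·w(t)·(1 − w(t))·ρ(t) − c, where c ∈ ℝ. If t₀ is a local maximum of Π, then V′(t₀) + 2·B′(t₀) = 0. -/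
/-!
Write `Π t = (V t₀ + B t₀) - L (w t) t - c`, where `L w t` is the expected quadratic loss of the
prediction with weight `w` on `M(t)`. Since `w t` minimises `L · t`, the envelope theorem gives
`Π' = -∂ₜL`, with no contribution from `w'`. At the symmetric point `w t₀ = 1/2` and
`ρ' t₀ = B' t₀ / 2` (because `θ t₀ = 0` kills the derivative of the cosine), so
`Π' t₀ = -(V' + B')/4 - B'/4 = -(V' + 2 B')/4`.
-/

open Real

/-- Expected quadratic loss of `(1 - w) • Y₀ + w • Y`, where `Y₀` and `Y` have expected squared
errors `a` and `b` and expected product of errors `r`. -/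
def combinedLoss (w a b r : ℝ) : ℝ :=
  (1 - w) ^ 2 * a + w ^ 2 * b + 2 * w * (1 - w) * r

/-- Envelope theorem: `hopt` says that `w t` is the loss-minimising weight at `t`, so `w'` does not
contribute to the derivative. -/
theorem hasDerivAt_combinedLoss_of_optimal {w b r : ℝ → ℝ} {w' b' r' a t : ℝ}
    (hw : HasDerivAt w w' t) (hb : HasDerivAt b b' t) (hr : HasDerivAt r r' t)
    (hopt : w t * (a + b t - 2 * r t) = a - r t) :
    HasDerivAt (fun t => combinedLoss (w t) a (b t) (r t))
      (w t ^ 2 * b' + 2 * w t * (1 - w t) * r') t := by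
  have h1w : HasDerivAt (fun t => 1 - w t) (-w') t := hw.const_sub 1
  have h := (((h1w.pow 2).mul_const a).add ((hw.pow 2).mul hb)).add
    (((hw.const_mul 2).mul h1w).mul hr)
  refine h.congr_deriv ?_
  simp only [Pi.mul_apply, Pi.pow_apply, Nat.cast_ofNat, Nat.add_one_sub_one, pow_one]
  linear_combination 2 * w' * hopt

theorem hasDerivAt_sqrt_mul_cos {B θ : ℝ → ℝ} {b' t₀ : ℝ} (hB : HasDerivAt B b' t₀)
    (hθ : DifferentiableAt ℝ θ t₀) (hB₀ : 0 < B t₀) (hθ₀ : θ t₀ = 0) :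
    HasDerivAt (fun t => √(B t * B t₀) * cos (θ t)) (b' / 2) t₀ := by
  have hsqrt : √(B t₀ * B t₀) = B t₀ := sqrt_mul_self hB₀.le
  have hcos := hθ.hasDerivAt.cos
  have h := ((hB.mul_const (B t₀)).sqrt (by positivity)).mul hcos
  refine h.congr_deriv ?_
  rw [hθ₀, sin_zero, cos_zero, hsqrt]
  field_simp
  ring

/-- **First-order condition for a symmetric interior equilibrium** (Proposition 3.5, FOC):
with `B, V, θ` twice continuously differentiable on a neighborhood of `t₀`, positive
`B, V` on that neighborhood and `θ t₀ = 0`, define `ρ t = √(B t · B t₀) · cos (θ t)`,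
the optimal weight `w t = (V t₀ + B t₀ − ρ t)/(V t + B t + V t₀ + B t₀ − 2 ρ t)`, and
firm 1's profit
`Π t = (V t₀ + B t₀) − (1 − w t)²(V t₀ + B t₀) − (w t)²(V t + B t) − 2 w t (1 − w t) ρ t − c`.
If `t₀` is a local maximum of `Π`, then `V′(t₀) + 2 B′(t₀) = 0`. -/
theorem symmetric_equilibrium_foc
    (t₀ c : ℝ) (B V θ : ℝ → ℝ) (s : Set ℝ) (hs : s ∈ nhds t₀)
    (hB : ContDiffOn ℝ 2 B s) (hV : ContDiffOn ℝ 2 V s) (hθ : ContDiffOn ℝ 2 θ s)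
    (hBpos : ∀ t ∈ s, 0 < B t) (hVpos : ∀ t ∈ s, 0 < V t)
    (hθ₀ : θ t₀ = 0)
    (ρ w profit : ℝ → ℝ)
    (hρ : ∀ t, ρ t = Real.sqrt (B t * B t₀) * Real.cos (θ t))
    (hw : ∀ t, w t = (V t₀ + B t₀ - ρ t) / (V t + B t + V t₀ + B t₀ - 2 * ρ t))
    (hprofit : ∀ t, profit t
      = (V t₀ + B t₀) - (1 - w t) ^ 2 * (V t₀ + B t₀) - (w t) ^ 2 * (V t + B t)
        - 2 * w t * (1 - w t) * ρ t - c)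
    (hmax : IsLocalMax profit t₀) :
    deriv V t₀ + 2 * deriv B t₀ = 0 := by
  have hB₀ : 0 < B t₀ := hBpos t₀ (mem_of_mem_nhds hs)
  have hV₀ : 0 < V t₀ := hVpos t₀ (mem_of_mem_nhds hs)
  have hBd := ((hB.contDiffAt hs).differentiableAt two_ne_zero).hasDerivAt
  have hVd := ((hV.contDiffAt hs).differentiableAt two_ne_zero).hasDerivAt
  have hρd : HasDerivAt ρ (deriv B t₀ / 2) t₀ := funext hρ ▸
    hasDerivAt_sqrt_mul_cos hBd ((hθ.contDiffAt hs).differentiableAt two_ne_zero) hB₀ hθ₀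
  have hρ₀ : ρ t₀ = B t₀ := by rw [hρ, hθ₀, cos_zero, mul_one, sqrt_mul_self hB₀.le]
  have hden : V t₀ + B t₀ + V t₀ + B t₀ - 2 * ρ t₀ = 2 * V t₀ := by rw [hρ₀]; ring
  have hw₀ : w t₀ = 1 / 2 := by
    rw [hw, hden, hρ₀]
    field_simp
    ring
  have hwd : DifferentiableAt ℝ w t₀ := funext hw ▸
    ((differentiableAt_const _).sub hρd.differentiableAt).div
      ((((hVd.add hBd).differentiableAt.add_const _).add_const _).sub
        (hρd.differentiableAt.const_mul 2)) (by rw [hden]; positivity)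
  have hopt : w t₀ * (V t₀ + B t₀ + (V t₀ + B t₀) - 2 * ρ t₀) = V t₀ + B t₀ - ρ t₀ := by
    rw [hw₀, hρ₀]; ring
  have hloss := hasDerivAt_combinedLoss_of_optimal hwd.hasDerivAt (hVd.add hBd) hρd hopt
  have hprofit_loss : profit = fun t =>
      V t₀ + B t₀ - combinedLoss (w t) (V t₀ + B t₀) (V t + B t) (ρ t) - c := by
    funext t; rw [hprofit, combinedLoss]; ring
  have hprofitd : HasDerivAt profit
      (-(w t₀ ^ 2 * (deriv V t₀ + deriv B t₀) + 2 * w t₀ * (1 - w t₀) * (deriv B t₀ / 2))) t₀ := by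
    rw [hprofit_loss]
    simpa using (hloss.const_sub (V t₀ + B t₀)).sub_const c
  rw [hw₀] at hprofitd
  linarith [hmax.hasDerivAt_eq_zero hprofitd]
end

section
/- Second-order condition for a symmetric interior equilibrium (Proposition 3.5, SOC): Let t₀ ∈ ℝ and let B, V, θ : ℝ → ℝ be twice continuously differentiable on a neighborhood of t₀ with B > 0 and V > 0 on that neighborhood and θ(t₀) = 0. Define ρ(t) = √(B(t)·B(t₀))·cos(θ(t)), w(t) = (V(t₀) + B(t₀) − ρ(t)) / (V(t) + B(t) + V(t₀) + B(t₀) − 2ρ(t)), and Π(t) = (V(t₀) + B(t₀)) − (1 − w(t))²·(V(t₀) + B(t₀)) − w(t)²·(V(t) + B(t)) − 2·w(t)·(1 − w(t))·ρ(t) − c, where c ∈ ℝ. If t₀ is a local maximum of Π, then −(1/4)·V″(t₀) − (1/2)·B″(t₀) + B′(t₀)²·(1/(8·B(t₀)) + 1/(4·V(t₀))) + (B(t₀)/2)·θ′(t₀)² ≤ 0. -/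
/-!
Substituting the optimal weight, the consumer's loss becomes `(V₀ + B₀) - N² / D` with
`N = V₀ + B₀ - ρ` and `D = V + B + V₀ + B₀ - 2ρ`, so near `t₀` the profit is `Π = N² / D - c`.
At a local maximum `Π' (t₀) = 0` and `Π'' (t₀) ≤ 0`. Differentiating `Π · D = N²` twice, the
cross term `2 Π' D'` vanishes at `t₀`, and what remains only involves `ρ(t₀) = B₀`,
`ρ'(t₀) = B'/2` and `ρ''(t₀) = B''/2 - B'²/(4 B₀) - B₀ θ'²`; the latter come from the second
derivatives of `√(B · B₀)` (obtained by differentiating its square) and of `cos θ` at `θ = 0`.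
-/

open Filter Topology Real

theorem ContDiffAt.eventually_differentiableAt {𝕜 E F : Type*} [NontriviallyNormedField 𝕜]
    [NormedAddCommGroup E] [NormedSpace 𝕜 E] [NormedAddCommGroup F] [NormedSpace 𝕜 F] {f : E → F}
    {x : E} {n : WithTop ℕ∞} (hf : ContDiffAt 𝕜 n f x) (hn : 1 ≤ n) :
    ∀ᶠ y in 𝓝 x, DifferentiableAt 𝕜 f y :=
  ((hf.of_le hn).eventually (by simp)).mono fun _ hy => hy.differentiableAt one_ne_zero

section SecondDerivative

variable {𝕜 : Type*} [NontriviallyNormedField 𝕜] {f g : 𝕜 → 𝕜} {a : 𝕜}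

theorem iteratedDeriv_two_eq_deriv_deriv {F : Type*} [NormedAddCommGroup F] [NormedSpace 𝕜 F]
    (f : 𝕜 → F) : iteratedDeriv 2 f = deriv (deriv f) := by
  rw [iteratedDeriv_succ, iteratedDeriv_one]

theorem iteratedDeriv_two_mul (hf : ContDiffAt 𝕜 2 f a) (hg : ContDiffAt 𝕜 2 g a) :
    iteratedDeriv 2 (fun x => f x * g x) a
      = f a * iteratedDeriv 2 g a + 2 * deriv f a * deriv g a + iteratedDeriv 2 f a * g a := by
  simp [iteratedDeriv_fun_mul hf hg, Finset.sum_range_succ]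

theorem iteratedDeriv_two_comp (hg : ContDiffAt 𝕜 2 g (f a)) (hf : ContDiffAt 𝕜 2 f a) :
    iteratedDeriv 2 (fun x => g (f x)) a
      = iteratedDeriv 2 g (f a) * deriv f a ^ 2 + deriv g (f a) * iteratedDeriv 2 f a := by
  have hg' : ∀ᶠ x in 𝓝 a, DifferentiableAt 𝕜 g (f x) :=
    hf.continuousAt.eventually (hg.eventually_differentiableAt (by norm_num))
  have hderiv : deriv (fun x => g (f x)) =ᶠ[𝓝 a] (deriv g ∘ f) * deriv f := by
    filter_upwards [hg', hf.eventually_differentiableAt (by norm_num)] with x hgx hfx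
    exact deriv_comp x hgx hfx
  have hg1 : DifferentiableAt 𝕜 (deriv g) (f a) :=
    (hg.derivWithin (m := 1) (by norm_num)).differentiableAt (by simp)
  have hf1 : DifferentiableAt 𝕜 (deriv f) a :=
    (hf.derivWithin (m := 1) (by norm_num)).differentiableAt (by simp)
  simp only [iteratedDeriv_two_eq_deriv_deriv]
  rw [hderiv.deriv_eq, deriv_mul (hg1.comp a (hf.differentiableAt (by simp))) hf1,
    deriv_comp a hg1 (hf.differentiableAt (by simp))]
  simp only [Function.comp_apply]
  ring

theorem iteratedDeriv_two_sq_div {n d : 𝕜 → 𝕜} (hn : ContDiffAt 𝕜 2 n a)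
    (hd : ContDiffAt 𝕜 2 d a) (hda : d a ≠ 0) :
    iteratedDeriv 2 (fun x => n x ^ 2 / d x) a
      = (2 * deriv n a ^ 2 + 2 * n a * iteratedDeriv 2 n a
          - 2 * deriv (fun x => n x ^ 2 / d x) a * deriv d a
          - n a ^ 2 / d a * iteratedDeriv 2 d a) / d a := by
  have hq : ContDiffAt 𝕜 2 (fun x => n x ^ 2 / d x) a := (hn.pow 2).div hd hda
  have hqd : (fun x => n x ^ 2 / d x * d x) =ᶠ[𝓝 a] fun x => n x * n x := by
    filter_upwards [hd.continuousAt.eventually_ne hda] with x hx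
    field_simp
  have key := hqd.iteratedDeriv_eq 2
  rw [iteratedDeriv_two_mul hq hd, iteratedDeriv_two_mul hn hn] at key
  rw [eq_div_iff hda]
  linear_combination key

end SecondDerivative

theorem IsLocalMax.iteratedDeriv_two_nonpos {f : ℝ → ℝ} {a : ℝ} (h : IsLocalMax f a)
    (hf : ContinuousAt f a) : iteratedDeriv 2 f a ≤ 0 := by
  rw [iteratedDeriv_two_eq_deriv_deriv]
  by_contra! hpos
  have hconst : f =ᶠ[𝓝 a] fun _ => f a := by
    filter_upwards [h, isLocalMin_of_deriv_deriv_pos hpos h.deriv_eq_zero hf] with x hmax hmin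
    exact le_antisymm hmax hmin
  have hderiv : deriv f =ᶠ[𝓝 a] fun _ => 0 := by
    filter_upwards [hconst.eventuallyEq_nhds] with x hx
    rw [hx.deriv_eq, deriv_const]
  rw [hderiv.deriv_eq, deriv_const] at hpos
  exact hpos.false

theorem iteratedDeriv_two_sqrt {f : ℝ → ℝ} {a : ℝ} (hf : ContDiffAt ℝ 2 f a) (ha : 0 < f a) :
    iteratedDeriv 2 (fun x => √(f x)) a
      = (iteratedDeriv 2 f a - deriv f a ^ 2 / (2 * f a)) / (2 * √(f a)) := by
  have hP : ContDiffAt ℝ 2 (fun x => √(f x)) a := hf.sqrt ha.ne'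
  have hsq : (fun x => √(f x) * √(f x)) =ᶠ[𝓝 a] f := by
    filter_upwards [hf.continuousAt.eventually (eventually_gt_nhds ha)] with x hx
    exact mul_self_sqrt hx.le
  have key := hsq.iteratedDeriv_eq 2
  rw [iteratedDeriv_two_mul hP hP, deriv_sqrt (hf.differentiableAt (by simp)) ha.ne'] at key
  have hs : 0 < √(f a) := sqrt_pos.2 ha
  have hs2 : √(f a) ^ 2 = f a := sq_sqrt ha.le
  set s := √(f a)
  rw [← hs2]
  field_simp at key ⊢
  linear_combination key

noncomputable def biasProduct (B θ : ℝ → ℝ) (t₀ t : ℝ) : ℝ := √(B t * B t₀) * cos (θ t)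

section BiasProduct

variable {B θ : ℝ → ℝ} {t₀ : ℝ}

theorem biasProduct_self (hb : 0 ≤ B t₀) (hθ₀ : θ t₀ = 0) : biasProduct B θ t₀ t₀ = B t₀ := by
  simp [biasProduct, hθ₀, sqrt_mul_self hb]

theorem contDiffAt_biasProduct (hB : ContDiffAt ℝ 2 B t₀) (hb : 0 < B t₀)
    (hθ : ContDiffAt ℝ 2 θ t₀) : ContDiffAt ℝ 2 (biasProduct B θ t₀) t₀ :=
  ((hB.mul contDiffAt_const).sqrt (by positivity)).mul (contDiff_cos.contDiffAt.comp t₀ hθ)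

theorem deriv_biasProduct_self (hB : DifferentiableAt ℝ B t₀) (hb : 0 < B t₀)
    (hθ : DifferentiableAt ℝ θ t₀) (hθ₀ : θ t₀ = 0) :
    deriv (biasProduct B θ t₀) t₀ = deriv B t₀ / 2 := by
  have hP := (hB.mul_const (B t₀)).sqrt (by positivity : B t₀ * B t₀ ≠ 0)
  unfold biasProduct
  rw [deriv_fun_mul hP hθ.cos, deriv_sqrt (hB.mul_const _) (by positivity),
    deriv_mul_const hB, deriv_cos hθ, hθ₀, sqrt_mul_self hb.le, cos_zero, sin_zero]
  field_simp
  ring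

theorem iteratedDeriv_two_biasProduct_self (hB : ContDiffAt ℝ 2 B t₀) (hb : 0 < B t₀)
    (hθ : ContDiffAt ℝ 2 θ t₀) (hθ₀ : θ t₀ = 0) :
    iteratedDeriv 2 (biasProduct B θ t₀) t₀
      = iteratedDeriv 2 B t₀ / 2 - deriv B t₀ ^ 2 / (4 * B t₀) - B t₀ * deriv θ t₀ ^ 2 := by
  have hf : ContDiffAt ℝ 2 (fun t => B t * B t₀) t₀ := hB.mul contDiffAt_const
  have hcos : ContDiffAt ℝ 2 (fun t => cos (θ t)) t₀ := contDiff_cos.contDiffAt.comp t₀ hθ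
  have hcos' : deriv (fun t => cos (θ t)) t₀ = 0 := by
    simp [deriv_cos (hθ.differentiableAt (by simp)), hθ₀]
  have hcos'' : iteratedDeriv 2 (fun t => cos (θ t)) t₀ = -deriv θ t₀ ^ 2 := by
    rw [iteratedDeriv_two_comp contDiff_cos.contDiffAt hθ, hθ₀]
    simp [iteratedDeriv_two_eq_deriv_deriv]
  unfold biasProduct
  rw [iteratedDeriv_two_mul (f := fun t => √(B t * B t₀)) (g := fun t => cos (θ t))
    (hf.sqrt (by positivity)) hcos, iteratedDeriv_two_sqrt hf (by positivity), hcos', hcos'',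
    iteratedDeriv_mul_const_field, deriv_mul_const (hB.differentiableAt (by simp)), hθ₀,
    sqrt_mul_self hb.le, cos_zero]
  field_simp
  ring

end BiasProduct

theorem loss_at_optimal_weight {K : Type*} [Field K] {a A r d w : K} (hd : d = A + a - 2 * r)
    (hd0 : d ≠ 0) (hw : w = (a - r) / d) :
    (1 - w) ^ 2 * a + w ^ 2 * A + 2 * w * (1 - w) * r = a - (a - r) ^ 2 / d := by
  subst hw
  field_simp
  rw [hd]
  ring

/-- Firm 1's profit plus `c` once the optimal weight is substituted, see
`loss_at_optimal_weight`. -/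
noncomputable def marginalValue (V B ρ : ℝ → ℝ) (t₀ t : ℝ) : ℝ :=
  (V t₀ + B t₀ - ρ t) ^ 2 / (V t + B t + V t₀ + B t₀ - 2 * ρ t)

section MarginalValue

variable {V B ρ : ℝ → ℝ} {t₀ : ℝ}

theorem continuousAt_marginalValue (hV : ContinuousAt V t₀) (hB : ContinuousAt B t₀)
    (hρ : ContinuousAt ρ t₀) (hden : V t₀ + B t₀ + V t₀ + B t₀ - 2 * ρ t₀ ≠ 0) :
    ContinuousAt (marginalValue V B ρ t₀) t₀ :=
  ((continuousAt_const.sub hρ).pow 2).div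
    ((((hV.add hB).add continuousAt_const).add continuousAt_const).sub
      (continuousAt_const.mul hρ)) hden

theorem iteratedDeriv_two_marginalValue_self (hV : ContDiffAt ℝ 2 V t₀) (hB : ContDiffAt ℝ 2 B t₀)
    (hρ : ContDiffAt ℝ 2 ρ t₀) (hv : 0 < V t₀) (hρ₀ : ρ t₀ = B t₀)
    (hρ₁ : deriv ρ t₀ = deriv B t₀ / 2) (hcrit : deriv (marginalValue V B ρ t₀) t₀ = 0) :
    iteratedDeriv 2 (marginalValue V B ρ t₀) t₀ = deriv B t₀ ^ 2 / (4 * V t₀)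
      - (iteratedDeriv 2 V t₀ + iteratedDeriv 2 B t₀) / 4 - iteratedDeriv 2 ρ t₀ / 2 := by
  have hN : ContDiffAt ℝ 2 (fun t => V t₀ + B t₀ - ρ t) t₀ := contDiffAt_const.sub hρ
  have hD : ContDiffAt ℝ 2 (fun t => V t + B t + V t₀ + B t₀ - 2 * ρ t) t₀ :=
    (((hV.add hB).add contDiffAt_const).add contDiffAt_const).sub (contDiffAt_const.mul hρ)
  have hD₀ : V t₀ + B t₀ + V t₀ + B t₀ - 2 * ρ t₀ = 2 * V t₀ := by rw [hρ₀]; ring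
  have hN₁ : deriv (fun t => V t₀ + B t₀ - ρ t) t₀ = -(deriv B t₀ / 2) := by
    rw [deriv_const_sub, hρ₁]
  have hN₂ : iteratedDeriv 2 (fun t => V t₀ + B t₀ - ρ t) t₀ = -iteratedDeriv 2 ρ t₀ := by
    rw [iteratedDeriv_const_sub (by norm_num), iteratedDeriv_neg]
  have hD₂ : iteratedDeriv 2 (fun t => V t + B t + V t₀ + B t₀ - 2 * ρ t) t₀
      = iteratedDeriv 2 V t₀ + iteratedDeriv 2 B t₀ - 2 * iteratedDeriv 2 ρ t₀ := by
    rw [iteratedDeriv_fun_sub (((hV.add hB).add contDiffAt_const).add contDiffAt_const)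
      (contDiffAt_const.mul hρ), iteratedDeriv_fun_add ((hV.add hB).add contDiffAt_const)
      contDiffAt_const, iteratedDeriv_fun_add (hV.add hB) contDiffAt_const,
      iteratedDeriv_fun_add hV hB, iteratedDeriv_const_mul_field]
    simp [iteratedDeriv_const]
  unfold marginalValue at hcrit ⊢
  rw [iteratedDeriv_two_sq_div hN hD (by rw [hD₀]; positivity), hcrit, hN₁, hN₂, hD₂, hD₀, hρ₀]
  field_simp
  ring

end MarginalValue

/-- **Second-order condition for a symmetric interior equilibrium** (Proposition 3.5, SOC):
with `B, V, θ` twice continuously differentiable on a neighborhood of `t₀`, positive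
`B, V` on that neighborhood and `θ t₀ = 0`, define `ρ t = √(B t · B t₀) · cos (θ t)`,
the optimal weight `w t = (V t₀ + B t₀ − ρ t)/(V t + B t + V t₀ + B t₀ − 2 ρ t)`, and
firm 1's profit
`Π t = (V t₀ + B t₀) − (1 − w t)²(V t₀ + B t₀) − (w t)²(V t + B t) − 2 w t (1 − w t) ρ t − c`.
If `t₀` is a local maximum of `Π`, then
`−(1/4)V″(t₀) − (1/2)B″(t₀) + B′(t₀)²(1/(8B(t₀)) + 1/(4V(t₀))) + (B(t₀)/2)θ′(t₀)² ≤ 0`. -/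
theorem symmetric_equilibrium_soc
    (t₀ c : ℝ) (B V θ : ℝ → ℝ) (s : Set ℝ) (hs : s ∈ nhds t₀)
    (hB : ContDiffOn ℝ 2 B s) (hV : ContDiffOn ℝ 2 V s) (hθ : ContDiffOn ℝ 2 θ s)
    (hBpos : ∀ t ∈ s, 0 < B t) (hVpos : ∀ t ∈ s, 0 < V t)
    (hθ₀ : θ t₀ = 0)
    (ρ w profit : ℝ → ℝ)
    (hρ : ∀ t, ρ t = Real.sqrt (B t * B t₀) * Real.cos (θ t))
    (hw : ∀ t, w t = (V t₀ + B t₀ - ρ t) / (V t + B t + V t₀ + B t₀ - 2 * ρ t))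
    (hprofit : ∀ t, profit t
      = (V t₀ + B t₀) - (1 - w t) ^ 2 * (V t₀ + B t₀) - (w t) ^ 2 * (V t + B t)
        - 2 * w t * (1 - w t) * ρ t - c)
    (hmax : IsLocalMax profit t₀) :
    -(1 / 4) * deriv (deriv V) t₀ - (1 / 2) * deriv (deriv B) t₀
      + (deriv B t₀) ^ 2 * (1 / (8 * B t₀) + 1 / (4 * V t₀))
      + (B t₀ / 2) * (deriv θ t₀) ^ 2 ≤ 0 := by
  have ht₀ : t₀ ∈ s := mem_of_mem_nhds hs
  have hb := hBpos t₀ ht₀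
  have hv := hVpos t₀ ht₀
  have hB₂ := hB.contDiffAt hs
  have hV₂ := hV.contDiffAt hs
  have hθ₂ := hθ.contDiffAt hs
  obtain rfl : ρ = biasProduct B θ t₀ := funext hρ
  set ρ := biasProduct B θ t₀
  have hρ₂ : ContDiffAt ℝ 2 ρ t₀ := contDiffAt_biasProduct hB₂ hb hθ₂
  have hρ₀ : ρ t₀ = B t₀ := biasProduct_self hb.le hθ₀
  have hden : ∀ᶠ t in 𝓝 t₀, V t + B t + V t₀ + B t₀ - 2 * ρ t ≠ 0 :=
    ContinuousAt.eventually_ne (by fun_prop) (by rw [hρ₀]; linarith)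
  have hprofit_eq : profit =ᶠ[𝓝 t₀] fun t => marginalValue V B ρ t₀ t - c := by
    filter_upwards [hden] with t ht
    rw [hprofit, marginalValue]
    linear_combination
      -loss_at_optimal_weight (a := V t₀ + B t₀) (A := V t + B t) (by ring) ht (hw t)
  have hgmax : IsLocalMax (marginalValue V B ρ t₀) t₀ := by
    simpa using (hmax.congr hprofit_eq).add (isLocalMax_const (b := c))
  have hgcont : ContinuousAt (marginalValue V B ρ t₀) t₀ :=
    continuousAt_marginalValue hV₂.continuousAt hB₂.continuousAt hρ₂.continuousAt
      hden.self_of_nhds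
  calc _ = iteratedDeriv 2 (marginalValue V B ρ t₀) t₀ := by
        rw [iteratedDeriv_two_marginalValue_self hV₂ hB₂ hρ₂ hv hρ₀
          (deriv_biasProduct_self (hB₂.differentiableAt (by simp)) hb
            (hθ₂.differentiableAt (by simp)) hθ₀) hgmax.deriv_eq_zero,
          iteratedDeriv_two_biasProduct_self hB₂ hb hθ₂ hθ₀, iteratedDeriv_two_eq_deriv_deriv,
          iteratedDeriv_two_eq_deriv_deriv]
        field_simp
        ring
    _ ≤ 0 := hgmax.iteratedDeriv_two_nonpos hgcont
end

section
/- Derivative conditions for interior optimal covariate choice (Appendix computation for differentiation with costless covariates): Let k, n, β̄², σ² be real numbers with k ≥ 1, n > k + 1, β̄² > 0 and σ² > 0. Define U : (−∞, n−1) → ℝ by U(d) = −σ² − β̄²·(k − d) − (1/2)·(β̄²·(k − d) + σ²)·d/(n − d − 1). Then U′(0) = −(β̄²·(k − 2n + 2) + σ²)/(2n − 2) and U′(k) = (β̄²·(k² − 3k(n−1) + 2(n−1)²) − (n−1)·σ²)/(2·(n − k − 1)²). Consequently, U′(0) > 0 and U′(k) < 0 if and only if k²/(n−1) − 3k + 2n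 − 2 < σ²/β̄² < −k + 2n − 2. -/
/-!
`U` agrees near every `d < n - 1` with a rational function that is regular there, so `U′` comes
from the quotient rule. Since `n - 1`, `n - k - 1` and `β̄²` are positive, clearing denominators
turns the two sign conditions into linear inequalities in `σ² / β̄²`.
-/

open Filter Topology

/-- The consumer's utility when both firms use `d` of the `k` covariates, with `b2 = β̄²`. -/
noncomputable def covariateUtility (k n b2 σ2 d : ℝ) : ℝ :=
  -σ2 - b2 * (k - d) - (1 / 2) * (b2 * (k - d) + σ2) * d / (n - d - 1)

section

variable (k n b2 σ2 : ℝ)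

theorem hasDerivAt_covariateUtility {d : ℝ} (hd : n - d - 1 ≠ 0) :
    HasDerivAt (covariateUtility k n b2 σ2)
      (b2 - ((b2 * k - 2 * b2 * d + σ2) * (n - d - 1) + (b2 * (k - d) + σ2) * d)
        / (2 * (n - d - 1) ^ 2)) d := by
  have hbias : HasDerivAt (fun x => b2 * (k - x) + σ2) (-b2) d := by
    simpa using (((hasDerivAt_id d).const_sub k).const_mul b2).add_const σ2
  have hnum : HasDerivAt (fun x => (1 / 2) * (b2 * (k - x) + σ2) * x)
      ((1 / 2) * (-b2) * d + (1 / 2) * (b2 * (k - d) + σ2) * 1) d :=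
    (hbias.const_mul (1 / 2)).mul (hasDerivAt_id d)
  have hden : HasDerivAt (fun x => n - x - 1) (-1) d :=
    ((hasDerivAt_id d).const_sub n).sub_const 1
  have hlin : HasDerivAt (fun x => -σ2 - b2 * (k - x)) b2 d := by
    simpa using (((hasDerivAt_id d).const_sub k).const_mul b2).const_sub (-σ2)
  refine (hlin.sub (hnum.div hden hd)).congr_deriv ?_
  field_simp
  ring

theorem hasDerivAt_covariateUtility_zero (hn : 1 < n) :
    HasDerivAt (covariateUtility k n b2 σ2)
      (-(b2 * (k - 2 * n + 2) + σ2) / (2 * n - 2)) 0 := by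
  refine (hasDerivAt_covariateUtility k n b2 σ2 (d := 0) (by linarith)).congr_deriv ?_
  have : n - 1 ≠ 0 := by linarith
  have : 2 * n - 2 ≠ 0 := by linarith
  simp only [sub_zero, mul_zero, add_zero]
  field_simp
  ring

theorem hasDerivAt_covariateUtility_self (hn : k + 1 < n) :
    HasDerivAt (covariateUtility k n b2 σ2)
      ((b2 * (k ^ 2 - 3 * k * (n - 1) + 2 * (n - 1) ^ 2) - (n - 1) * σ2)
        / (2 * (n - k - 1) ^ 2)) k := by
  have hnk : n - k - 1 ≠ 0 := by linarith
  refine (hasDerivAt_covariateUtility k n b2 σ2 hnk).congr_deriv ?_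
  field_simp
  ring

variable {k n b2 σ2}

theorem covariateUtility_deriv_zero_pos_iff (hn : 1 < n) (hb2 : 0 < b2) :
    0 < -(b2 * (k - 2 * n + 2) + σ2) / (2 * n - 2) ↔ σ2 / b2 < -k + 2 * n - 2 := by
  rw [div_lt_iff₀ hb2, lt_div_iff₀ (by linarith)]
  constructor <;> intro h <;> nlinarith

theorem covariateUtility_deriv_self_neg_iff (hn : 1 < n) (hnk : k + 1 < n) (hb2 : 0 < b2) :
    (b2 * (k ^ 2 - 3 * k * (n - 1) + 2 * (n - 1) ^ 2) - (n - 1) * σ2)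
        / (2 * (n - k - 1) ^ 2) < 0
      ↔ k ^ 2 / (n - 1) - 3 * k + 2 * n - 2 < σ2 / b2 := by
  have hn1 : 0 < n - 1 := by linarith
  have hlhs : k ^ 2 / (n - 1) - 3 * k + 2 * n - 2
      = (k ^ 2 - 3 * k * (n - 1) + 2 * (n - 1) ^ 2) / (n - 1) := by
    field_simp
    ring
  have hden : 0 < 2 * (n - k - 1) ^ 2 := by
    have : 0 < n - k - 1 := by linarith
    positivity
  rw [hlhs, div_lt_div_iff₀ hn1 hb2, div_lt_iff₀ hden, zero_mul]
  constructor <;> intro h <;> linarith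

end

theorem interior_covariate_choice_derivatives_general
    (k n b2 σ2 : ℝ) (hk : 1 ≤ k) (hn : k + 1 < n) (hb2 : 0 < b2)
    (U : ℝ → ℝ)
    (hU : ∀ d : ℝ, d < n - 1 →
      U d = -σ2 - b2 * (k - d) - (1 / 2) * (b2 * (k - d) + σ2) * d / (n - d - 1)) :
    deriv U 0 = -(b2 * (k - 2 * n + 2) + σ2) / (2 * n - 2)
    ∧ deriv U k
        = (b2 * (k ^ 2 - 3 * k * (n - 1) + 2 * (n - 1) ^ 2) - (n - 1) * σ2)
          / (2 * (n - k - 1) ^ 2)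
    ∧ ((0 < deriv U 0 ∧ deriv U k < 0)
        ↔ (k ^ 2 / (n - 1) - 3 * k + 2 * n - 2 < σ2 / b2 ∧ σ2 / b2 < -k + 2 * n - 2)) := by
  have hn1 : 1 < n := by linarith
  have hUeq : ∀ d < n - 1, U =ᶠ[𝓝 d] covariateUtility k n b2 σ2 := fun d hd =>
    eventually_of_mem (Iio_mem_nhds hd) hU
  have h0 := ((hasDerivAt_covariateUtility_zero k n b2 σ2 hn1).congr_of_eventuallyEq
    (hUeq 0 (by linarith))).deriv
  have hkd := ((hasDerivAt_covariateUtility_self k n b2 σ2 hn).congr_of_eventuallyEq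
    (hUeq k (by linarith))).deriv
  refine ⟨h0, hkd, ?_⟩
  rw [h0, hkd, covariateUtility_deriv_zero_pos_iff hn1 hb2,
    covariateUtility_deriv_self_neg_iff hn1 hn hb2, and_comm]

/-- **Derivative conditions for interior optimal covariate choice** (Appendix
computation for differentiation with costless covariates): for real `k ≥ 1`,
`n > k + 1`, `β̄² > 0`, `σ² > 0`, the function
`U d = −σ² − β̄²(k − d) − (1/2)(β̄²(k − d) + σ²) d/(n − d − 1)` (for `d < n − 1`)
satisfies `U′(0) = −(β̄²(k − 2n + 2) + σ²)/(2n − 2)` and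
`U′(k) = (β̄²(k² − 3k(n−1) + 2(n−1)²) − (n−1)σ²)/(2(n − k − 1)²)`; consequently
`U′(0) > 0 ∧ U′(k) < 0 ↔ k²/(n−1) − 3k + 2n − 2 < σ²/β̄² < −k + 2n − 2`. -/
theorem interior_covariate_choice_derivatives
    (k n b2 σ2 : ℝ) (hk : 1 ≤ k) (hn : k + 1 < n) (hb2 : 0 < b2) (hσ2 : 0 < σ2)
    (U : ℝ → ℝ)
    (hU : ∀ d : ℝ, d < n - 1 →
      U d = -σ2 - b2 * (k - d) - (1 / 2) * (b2 * (k - d) + σ2) * d / (n - d - 1)) :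
    deriv U 0 = -(b2 * (k - 2 * n + 2) + σ2) / (2 * n - 2)
    ∧ deriv U k
        = (b2 * (k ^ 2 - 3 * k * (n - 1) + 2 * (n - 1) ^ 2) - (n - 1) * σ2)
          / (2 * (n - k - 1) ^ 2)
    ∧ ((0 < deriv U 0 ∧ deriv U k < 0)
        ↔ (k ^ 2 / (n - 1) - 3 * k + 2 * n - 2 < σ2 / b2 ∧ σ2 / b2 < -k + 2 * n - 2)) :=
  interior_covariate_choice_derivatives_general k n b2 σ2 hk hn hb2 U hU
end
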